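/- arXiv:1908.02055 — 2 statements merged into one kernel-verified Lean document; each statement's English description precedes it below -/
import Mathlib

section
/- Suppose at time step k the lattice states satisfy 0 ≤ a_i^k, 0 ≤ r_i^k and a_i^k + r_i^k ≤ 1 for all sites i = 1,…,N. Then for every interior site i = 2,…,N−1 the explicit Euler update satisfies 1 − ρ_i^{k+1} ≥ (1 − 4τH·V_max)·(1 − ρ_i^k), where ρ_i^k := a_i^k + r_i^k; in particular, if 1 − 4τH·V_max ≥ 0 then ρ_i^{k+1} ≤ 1 at all interior sites. -/
/-!
Summing the two species, the update of `1 - ρ_i` consists of outflux terms, which only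
increase `1 - ρ_i` because the neighbouring densities are at most one, and influx terms,
each carrying the factor `1 - ρ_i` times a neighbour's occupation times a weight. Since
`a_j + r_j ≤ 1` at each neighbour `j` and all weights are at most `V_max`, the influx from
the two neighbours is at most `2 V_max (1 - ρ_i) ≤ 4 V_max (1 - ρ_i)`.
-/

/-- The bracket multiplied by `τ H` in the interior update of species `q`. -/
def hopFlux (q ρ : ℕ → ℝ) (w : ℕ → ℕ → ℝ) (i : ℕ) : ℝ :=
  -(q i) * (1 - ρ (i - 1)) * w i (i - 1)
    + q (i - 1) * (1 - ρ i) * w (i - 1) i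
    - q i * (1 - ρ (i + 1)) * w i (i + 1)
    + q (i + 1) * (1 - ρ i) * w (i + 1) i

theorem hopFlux_le_influx {q ρ : ℕ → ℝ} {w : ℕ → ℕ → ℝ} {i : ℕ} (hq : 0 ≤ q i)
    (hρ_prev : ρ (i - 1) ≤ 1) (hρ_next : ρ (i + 1) ≤ 1)
    (hw_prev : 0 ≤ w i (i - 1)) (hw_next : 0 ≤ w i (i + 1)) :
    hopFlux q ρ w i ≤ (q (i - 1) * w (i - 1) i + q (i + 1) * w (i + 1) i) * (1 - ρ i) := by
  have h_prev : 0 ≤ q i * (1 - ρ (i - 1)) * w i (i - 1) :=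
    mul_nonneg (mul_nonneg hq (sub_nonneg.2 hρ_prev)) hw_prev
  have h_next : 0 ≤ q i * (1 - ρ (i + 1)) * w i (i + 1) :=
    mul_nonneg (mul_nonneg hq (sub_nonneg.2 hρ_next)) hw_next
  unfold hopFlux
  linarith

theorem mul_add_mul_le_of_add_le_one {x y u v V : ℝ} (hx : 0 ≤ x) (hy : 0 ≤ y)
    (hxy : x + y ≤ 1) (hu : u ≤ V) (hv : v ≤ V) (hV : 0 ≤ V) :
    x * u + y * v ≤ V :=
  calc x * u + y * v ≤ x * V + y * V := add_le_add (by gcongr) (by gcongr)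
    _ = (x + y) * V := by ring
    _ ≤ V := mul_le_of_le_one_left hV hxy

def BoxConstraint (a r : ℕ → ℝ) (j : ℕ) : Prop :=
  0 ≤ a j ∧ 0 ≤ r j ∧ a j + r j ≤ 1

theorem hopFlux_add_hopFlux_le {a r : ℕ → ℝ} {wa wr : ℕ → ℕ → ℝ} {V : ℝ} {i : ℕ} (hV : 0 ≤ V)
    (h_prev : BoxConstraint a r (i - 1)) (h_site : BoxConstraint a r i)
    (h_next : BoxConstraint a r (i + 1))
    (hwa_out : 0 ≤ wa i (i - 1) ∧ 0 ≤ wa i (i + 1))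
    (hwr_out : 0 ≤ wr i (i - 1) ∧ 0 ≤ wr i (i + 1))
    (hwa_in : wa (i - 1) i ≤ V ∧ wa (i + 1) i ≤ V)
    (hwr_in : wr (i - 1) i ≤ V ∧ wr (i + 1) i ≤ V) :
    hopFlux a (fun j => a j + r j) wa i + hopFlux r (fun j => a j + r j) wr i
      ≤ 4 * V * (1 - (a i + r i)) := by
  obtain ⟨ha_prev, hr_prev, hρ_prev⟩ := h_prev
  obtain ⟨ha, hr, hρ⟩ := h_site
  obtain ⟨ha_next, hr_next, hρ_next⟩ := h_next
  have hFa := hopFlux_le_influx (ρ := fun j => a j + r j) ha hρ_prev hρ_next hwa_out.1 hwa_out.2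
  have hFr := hopFlux_le_influx (ρ := fun j => a j + r j) hr hρ_prev hρ_next hwr_out.1 hwr_out.2
  have h_in_prev := mul_add_mul_le_of_add_le_one ha_prev hr_prev hρ_prev hwa_in.1 hwr_in.1 hV
  have h_in_next := mul_add_mul_le_of_add_le_one ha_next hr_next hρ_next hwa_in.2 hwr_in.2 hV
  have h_vacancy : 0 ≤ 1 - (a i + r i) := sub_nonneg.2 hρ
  have h_influx := mul_le_mul_of_nonneg_right (add_le_add h_in_prev h_in_next) h_vacancy
  have h_influx_nonneg : 0 ≤ 2 * V * (1 - (a i + r i)) := by positivity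
  linarith

theorem interior_density_bound_general
    (N : ℕ)
    (τ H Vmax : ℝ) (hτ : 0 < τ) (hH : 0 ≤ H) (hVmax : 0 < Vmax)
    (wa wr : ℕ → ℕ → ℝ)
    (hwa_pos : ∀ i j : ℕ, (j = i + 1 ∨ i = j + 1) → 0 < wa i j)
    (hwr_pos : ∀ i j : ℕ, (j = i + 1 ∨ i = j + 1) → 0 < wr i j)
    (hwa_le : ∀ i j : ℕ, (j = i + 1 ∨ i = j + 1) → wa i j ≤ Vmax)
    (hwr_le : ∀ i j : ℕ, (j = i + 1 ∨ i = j + 1) → wr i j ≤ Vmax)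
    (a r a' r' : ℕ → ℝ)
    (ha_nonneg : ∀ i : ℕ, 1 ≤ i → i ≤ N → 0 ≤ a i)
    (hr_nonneg : ∀ i : ℕ, 1 ≤ i → i ≤ N → 0 ≤ r i)
    (hrho_le : ∀ i : ℕ, 1 ≤ i → i ≤ N → a i + r i ≤ 1)
    (ha_upd : ∀ i : ℕ, 2 ≤ i → i ≤ N - 1 →
      a' i = a i + τ * H *
        (-(a i) * (1 - (a (i - 1) + r (i - 1))) * wa i (i - 1)
          + a (i - 1) * (1 - (a i + r i)) * wa (i - 1) i
          - a i * (1 - (a (i + 1) + r (i + 1))) * wa i (i + 1)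
          + a (i + 1) * (1 - (a i + r i)) * wa (i + 1) i))
    (hr_upd : ∀ i : ℕ, 2 ≤ i → i ≤ N - 1 →
      r' i = r i + τ * H *
        (-(r i) * (1 - (a (i - 1) + r (i - 1))) * wr i (i - 1)
          + r (i - 1) * (1 - (a i + r i)) * wr (i - 1) i
          - r i * (1 - (a (i + 1) + r (i + 1))) * wr i (i + 1)
          + r (i + 1) * (1 - (a i + r i)) * wr (i + 1) i)) :
    ∀ i : ℕ, 2 ≤ i → i ≤ N - 1 →
      (1 - 4 * τ * H * Vmax) * (1 - (a i + r i)) ≤ 1 - (a' i + r' i) ∧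
      (0 ≤ 1 - 4 * τ * H * Vmax → a' i + r' i ≤ 1) := by
  intro i hi hiN
  have box (j : ℕ) (h1 : 1 ≤ j) (hN : j ≤ N) : BoxConstraint a r j :=
    ⟨ha_nonneg j h1 hN, hr_nonneg j h1 hN, hrho_le j h1 hN⟩
  have h_prev : i = i - 1 + 1 := by omega
  have hF := hopFlux_add_hopFlux_le hVmax.le
    (box (i - 1) (by omega) (by omega)) (box i (by omega) (by omega)) (box (i + 1) le_add_self (by omega))
    ⟨(hwa_pos _ _ (.inr h_prev)).le, (hwa_pos _ _ (.inl rfl)).le⟩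
    ⟨(hwr_pos _ _ (.inr h_prev)).le, (hwr_pos _ _ (.inl rfl)).le⟩
    ⟨hwa_le _ _ (.inl h_prev), hwa_le _ _ (.inr rfl)⟩ ⟨hwr_le _ _ (.inl h_prev), hwr_le _ _ (.inr rfl)⟩
  have h_vacancy : 0 ≤ 1 - (a i + r i) := sub_nonneg.2 (hrho_le i (by omega) (by omega))
  have h_step : (1 - 4 * τ * H * Vmax) * (1 - (a i + r i)) ≤ 1 - (a' i + r' i) := by
    have := mul_le_mul_of_nonneg_left hF (mul_nonneg hτ.le hH)
    rw [ha_upd i hi hiN, hr_upd i hi hiN]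
    unfold hopFlux at this
    linarith
  exact ⟨h_step, fun h_cfl => by linarith [mul_nonneg h_cfl h_vacancy]⟩

/-- Under the box constraints at time step `k`, the explicit Euler
update of the lattice scheme satisfies, at every interior site `i = 2,…,N-1`,
`1 - ρ_i^{k+1} ≥ (1 - 4τH·V_max)·(1 - ρ_i^k)` where `ρ_i = a_i + r_i`; in
particular, if `1 - 4τH·V_max ≥ 0` then `ρ_i^{k+1} ≤ 1` at all interior sites. -/
theorem interior_density_bound
    (N : ℕ) (hN : 3 ≤ N)
    (τ H Vmax : ℝ) (hτ : 0 < τ) (hH : 0 ≤ H) (hVmax : 0 < Vmax)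
    (wa wr : ℕ → ℕ → ℝ)
    (hwa_pos : ∀ i j : ℕ, (j = i + 1 ∨ i = j + 1) → 0 < wa i j)
    (hwr_pos : ∀ i j : ℕ, (j = i + 1 ∨ i = j + 1) → 0 < wr i j)
    (hwa_le : ∀ i j : ℕ, (j = i + 1 ∨ i = j + 1) → wa i j ≤ Vmax)
    (hwr_le : ∀ i j : ℕ, (j = i + 1 ∨ i = j + 1) → wr i j ≤ Vmax)
    (a r a' r' : ℕ → ℝ)
    (ha_nonneg : ∀ i : ℕ, 1 ≤ i → i ≤ N → 0 ≤ a i)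
    (hr_nonneg : ∀ i : ℕ, 1 ≤ i → i ≤ N → 0 ≤ r i)
    (hrho_le : ∀ i : ℕ, 1 ≤ i → i ≤ N → a i + r i ≤ 1)
    (ha_upd : ∀ i : ℕ, 2 ≤ i → i ≤ N - 1 →
      a' i = a i + τ * H *
        (-(a i) * (1 - (a (i - 1) + r (i - 1))) * wa i (i - 1)
          + a (i - 1) * (1 - (a i + r i)) * wa (i - 1) i
          - a i * (1 - (a (i + 1) + r (i + 1))) * wa i (i + 1)
          + a (i + 1) * (1 - (a i + r i)) * wa (i + 1) i))
    (hr_upd : ∀ i : ℕ, 2 ≤ i → i ≤ N - 1 →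
      r' i = r i + τ * H *
        (-(r i) * (1 - (a (i - 1) + r (i - 1))) * wr i (i - 1)
          + r (i - 1) * (1 - (a i + r i)) * wr (i - 1) i
          - r i * (1 - (a (i + 1) + r (i + 1))) * wr i (i + 1)
          + r (i + 1) * (1 - (a i + r i)) * wr (i + 1) i)) :
    ∀ i : ℕ, 2 ≤ i → i ≤ N - 1 →
      (1 - 4 * τ * H * Vmax) * (1 - (a i + r i)) ≤ 1 - (a' i + r' i) ∧
      (0 ≤ 1 - 4 * τ * H * Vmax → a' i + r' i ≤ 1) :=
  interior_density_bound_general N τ H Vmax hτ hH hVmax wa wr hwa_pos hwr_pos hwa_le hwr_le a r a'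
    r' ha_nonneg hr_nonneg hrho_le ha_upd hr_upd
end

section
/- Augment the explicit Euler lattice scheme, for a grid width h > 0, by the pool updates Λ_N^{k+1} = Λ_N^k + τh·(B_a a_N^k − A_r(1−ρ_N^k)) and Λ_som^{k+1} = Λ_som^k + τh·(B_r r_1^k − A_a(1−ρ_1^k)). Then the total mass of the fully discrete system is exactly conserved: for every k ≥ 0, h·Σ_{i=1}^N (a_i^k + r_i^k) + Λ_N^k + Λ_som^k = h·Σ_{i=1}^N (a_i^0 + r_i^0) + Λ_N^0 + Λ_som^0. -/
/-!
Every hopping term of the lattice scheme is the net flux across one edge `(i, i+1)`: it leaves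
one site and enters its neighbour, so these terms telescope in the sum over the lattice. What
remains of the change of `Σ_i (a_i + r_i)` are the four boundary in- and outfluxes, and the pool
updates are chosen so that `Λ_N + Λ_som` absorbs exactly `h` times their negative.
-/

open Finset

theorem Finset.sum_Icc_succ_sub_pred_sub {G : Type*} [AddCommGroup G] (F : ℕ → G) {m n : ℕ}
    (hmn : m ≤ n) : ∑ i ∈ Icc (m + 1) n, (F (i - 1) - F i) = F m - F n := by
  induction n, hmn using Nat.le_induction with
  | base => simp
  | succ n hmn ih =>
    rw [sum_Icc_succ_top (by omega), ih, Nat.add_sub_cancel]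
    abel

theorem sum_Icc_eq_add_of_conservation_form {G : Type*} [AddCommGroup G] {N : ℕ} (hN : 2 ≤ N)
    {u v F : ℕ → G} {s₁ s_N : G}
    (h_int : ∀ i, 2 ≤ i → i ≤ N - 1 → v i = u i + (F (i - 1) - F i))
    (h_one : v 1 = u 1 - F 1 + s₁) (h_last : v N = u N + F (N - 1) + s_N) :
    ∑ i ∈ Icc 1 N, v i = ∑ i ∈ Icc 1 N, u i + s₁ + s_N := by
  have h_split : ∀ f : ℕ → G, ∑ i ∈ Icc 1 N, f i = f 1 + (∑ i ∈ Icc 2 (N - 1), f i + f N) := by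
    intro f
    rw [← insert_Icc_add_one_left_eq_Icc (by omega : 1 ≤ N), sum_insert (by simp),
      ← insert_Icc_sub_one_right_eq_Icc (a := 1 + 1) (by omega : 2 ≤ N),
      sum_insert (by simp; omega), add_comm (f N)]
    rfl
  have h_interior : ∑ i ∈ Icc 2 (N - 1), v i = ∑ i ∈ Icc 2 (N - 1), u i + (F 1 - F (N - 1)) := by
    rw [sum_congr rfl fun i hi ↦ h_int i (mem_Icc.1 hi).1 (mem_Icc.1 hi).2, sum_add_distrib,
      sum_Icc_succ_sub_pred_sub F (by omega)]
  rw [h_split v, h_split u, h_interior, h_one, h_last]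
  abel

/-- Net hopping current from site `i` to site `i + 1`, before scaling by `τ H`. -/
def hoppingFlux (w : ℕ → ℕ → ℝ) (u ρ : ℕ → ℝ) (i : ℕ) : ℝ :=
  u i * (1 - ρ (i + 1)) * w i (i + 1) - u (i + 1) * (1 - ρ i) * w (i + 1) i

theorem sum_Icc_hopping_step {N : ℕ} (hN : 2 ≤ N) (c : ℝ) (w : ℕ → ℕ → ℝ) {u ρ v : ℕ → ℝ}
    {s₁ s_N : ℝ}
    (h_int : ∀ i, 2 ≤ i → i ≤ N - 1 → v i = u i + c *
      (-(u i) * (1 - ρ (i - 1)) * w i (i - 1) + u (i - 1) * (1 - ρ i) * w (i - 1) i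
        - u i * (1 - ρ (i + 1)) * w i (i + 1) + u (i + 1) * (1 - ρ i) * w (i + 1) i))
    (h_one : v 1 = u 1 + c * (-(u 1) * (1 - ρ 2) * w 1 2 + u 2 * (1 - ρ 1) * w 2 1) + s₁)
    (h_last : v N = u N + c *
      (-(u N) * (1 - ρ (N - 1)) * w N (N - 1) + u (N - 1) * (1 - ρ N) * w (N - 1) N) + s_N) :
    ∑ i ∈ Icc 1 N, v i = ∑ i ∈ Icc 1 N, u i + s₁ + s_N := by
  have h_pred : N - 1 + 1 = N := by omega
  refine sum_Icc_eq_add_of_conservation_form hN (F := fun i ↦ c * hoppingFlux w u ρ i)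
    (fun i hi hi' ↦ ?_) (by rw [h_one, hoppingFlux]; ring)
    (by rw [h_last, hoppingFlux, h_pred]; ring)
  have h_pred_i : i - 1 + 1 = i := by omega
  rw [h_int i hi hi', hoppingFlux, hoppingFlux, h_pred_i]
  ring

theorem discrete_total_mass_conservation_general
    (N : ℕ) (hN : 3 ≤ N)
    (τ h H : ℝ)
    (Aa Ar Ba Br : ℝ)
    (wa wr : ℕ → ℕ → ℝ)
    (a r : ℕ → ℕ → ℝ) (ΛN Λsom : ℕ → ℝ)
    (ha_upd : ∀ k : ℕ, ∀ i : ℕ, 2 ≤ i → i ≤ N - 1 →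
      a (k + 1) i = a k i + τ * H *
        (-(a k i) * (1 - (a k (i - 1) + r k (i - 1))) * wa i (i - 1)
          + a k (i - 1) * (1 - (a k i + r k i)) * wa (i - 1) i
          - a k i * (1 - (a k (i + 1) + r k (i + 1))) * wa i (i + 1)
          + a k (i + 1) * (1 - (a k i + r k i)) * wa (i + 1) i))
    (hr_upd : ∀ k : ℕ, ∀ i : ℕ, 2 ≤ i → i ≤ N - 1 →
      r (k + 1) i = r k i + τ * H *
        (-(r k i) * (1 - (a k (i - 1) + r k (i - 1))) * wr i (i - 1)
          + r k (i - 1) * (1 - (a k i + r k i)) * wr (i - 1) i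
          - r k i * (1 - (a k (i + 1) + r k (i + 1))) * wr i (i + 1)
          + r k (i + 1) * (1 - (a k i + r k i)) * wr (i + 1) i))
    (ha1_upd : ∀ k : ℕ,
      a (k + 1) 1 = a k 1 + τ *
        (H * (-(a k 1) * (1 - (a k 2 + r k 2)) * wa 1 2
          + a k 2 * (1 - (a k 1 + r k 1)) * wa 2 1)
          + Aa * (1 - (a k 1 + r k 1))))
    (haN_upd : ∀ k : ℕ,
      a (k + 1) N = a k N + τ *
        (H * (-(a k N) * (1 - (a k (N - 1) + r k (N - 1))) * wa N (N - 1)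
          + a k (N - 1) * (1 - (a k N + r k N)) * wa (N - 1) N)
          - Ba * a k N))
    (hr1_upd : ∀ k : ℕ,
      r (k + 1) 1 = r k 1 + τ *
        (H * (-(r k 1) * (1 - (a k 2 + r k 2)) * wr 1 2
          + r k 2 * (1 - (a k 1 + r k 1)) * wr 2 1)
          - Br * r k 1))
    (hrN_upd : ∀ k : ℕ,
      r (k + 1) N = r k N + τ *
        (H * (-(r k N) * (1 - (a k (N - 1) + r k (N - 1))) * wr N (N - 1)
          + r k (N - 1) * (1 - (a k N + r k N)) * wr (N - 1) N)
          + Ar * (1 - (a k N + r k N))))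
    -- pool updates
    (hΛN_upd : ∀ k : ℕ,
      ΛN (k + 1) = ΛN k + τ * h * (Ba * a k N - Ar * (1 - (a k N + r k N))))
    (hΛsom_upd : ∀ k : ℕ,
      Λsom (k + 1) = Λsom k + τ * h * (Br * r k 1 - Aa * (1 - (a k 1 + r k 1)))) :
    ∀ k : ℕ,
      h * (∑ i ∈ Finset.Icc 1 N, (a k i + r k i)) + ΛN k + Λsom k =
        h * (∑ i ∈ Finset.Icc 1 N, (a 0 i + r 0 i)) + ΛN 0 + Λsom 0 := by
  have hN' : 2 ≤ N := by omega
  intro k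
  induction k with
  | zero => rfl
  | succ k ih =>
    have h_a := sum_Icc_hopping_step hN' (τ * H) wa (ρ := fun i ↦ a k i + r k i) (ha_upd k)
      (s₁ := τ * (Aa * (1 - (a k 1 + r k 1)))) (s_N := -(τ * (Ba * a k N)))
      (by rw [ha1_upd k]; ring) (by rw [haN_upd k]; ring)
    have h_r := sum_Icc_hopping_step hN' (τ * H) wr (ρ := fun i ↦ a k i + r k i) (hr_upd k)
      (s₁ := -(τ * (Br * r k 1))) (s_N := τ * (Ar * (1 - (a k N + r k N))))
      (by rw [hr1_upd k]; ring) (by rw [hrN_upd k]; ring)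
    rw [sum_add_distrib] at ih ⊢
    linear_combination h * h_a + h * h_r + hΛN_upd k + hΛsom_upd k + ih

/-- Augmenting the explicit Euler lattice scheme (grid width `h`)
by the pool updates
`Λ_N^{k+1} = Λ_N^k + τh·(B_a a_N^k - A_r(1-ρ_N^k))` and
`Λ_som^{k+1} = Λ_som^k + τh·(B_r r_1^k - A_a(1-ρ_1^k))`,
the total mass `h·Σ_i (a_i^k + r_i^k) + Λ_N^k + Λ_som^k` of the fully discrete
system is exactly conserved for every time step `k`. -/
theorem discrete_total_mass_conservation
    (N : ℕ) (hN : 3 ≤ N)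
    (τ h H : ℝ) (hτ : 0 < τ) (hh : 0 < h) (hH : 0 ≤ H)
    (Aa Ar Ba Br : ℝ) (hAa : 0 ≤ Aa) (hAr : 0 ≤ Ar) (hBa : 0 ≤ Ba) (hBr : 0 ≤ Br)
    (wa wr : ℕ → ℕ → ℝ)
    (hwa_pos : ∀ i j : ℕ, (j = i + 1 ∨ i = j + 1) → 0 < wa i j)
    (hwr_pos : ∀ i j : ℕ, (j = i + 1 ∨ i = j + 1) → 0 < wr i j)
    (a r : ℕ → ℕ → ℝ) (ΛN Λsom : ℕ → ℝ)
    (ha_upd : ∀ k : ℕ, ∀ i : ℕ, 2 ≤ i → i ≤ N - 1 →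
      a (k + 1) i = a k i + τ * H *
        (-(a k i) * (1 - (a k (i - 1) + r k (i - 1))) * wa i (i - 1)
          + a k (i - 1) * (1 - (a k i + r k i)) * wa (i - 1) i
          - a k i * (1 - (a k (i + 1) + r k (i + 1))) * wa i (i + 1)
          + a k (i + 1) * (1 - (a k i + r k i)) * wa (i + 1) i))
    (hr_upd : ∀ k : ℕ, ∀ i : ℕ, 2 ≤ i → i ≤ N - 1 →
      r (k + 1) i = r k i + τ * H *
        (-(r k i) * (1 - (a k (i - 1) + r k (i - 1))) * wr i (i - 1)
          + r k (i - 1) * (1 - (a k i + r k i)) * wr (i - 1) i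
          - r k i * (1 - (a k (i + 1) + r k (i + 1))) * wr i (i + 1)
          + r k (i + 1) * (1 - (a k i + r k i)) * wr (i + 1) i))
    (ha1_upd : ∀ k : ℕ,
      a (k + 1) 1 = a k 1 + τ *
        (H * (-(a k 1) * (1 - (a k 2 + r k 2)) * wa 1 2
          + a k 2 * (1 - (a k 1 + r k 1)) * wa 2 1)
          + Aa * (1 - (a k 1 + r k 1))))
    (haN_upd : ∀ k : ℕ,
      a (k + 1) N = a k N + τ *
        (H * (-(a k N) * (1 - (a k (N - 1) + r k (N - 1))) * wa N (N - 1)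
          + a k (N - 1) * (1 - (a k N + r k N)) * wa (N - 1) N)
          - Ba * a k N))
    (hr1_upd : ∀ k : ℕ,
      r (k + 1) 1 = r k 1 + τ *
        (H * (-(r k 1) * (1 - (a k 2 + r k 2)) * wr 1 2
          + r k 2 * (1 - (a k 1 + r k 1)) * wr 2 1)
          - Br * r k 1))
    (hrN_upd : ∀ k : ℕ,
      r (k + 1) N = r k N + τ *
        (H * (-(r k N) * (1 - (a k (N - 1) + r k (N - 1))) * wr N (N - 1)
          + r k (N - 1) * (1 - (a k N + r k N)) * wr (N - 1) N)
          + Ar * (1 - (a k N + r k N))))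
    -- pool updates
    (hΛN_upd : ∀ k : ℕ,
      ΛN (k + 1) = ΛN k + τ * h * (Ba * a k N - Ar * (1 - (a k N + r k N))))
    (hΛsom_upd : ∀ k : ℕ,
      Λsom (k + 1) = Λsom k + τ * h * (Br * r k 1 - Aa * (1 - (a k 1 + r k 1)))) :
    ∀ k : ℕ,
      h * (∑ i ∈ Finset.Icc 1 N, (a k i + r k i)) + ΛN k + Λsom k =
        h * (∑ i ∈ Finset.Icc 1 N, (a 0 i + r 0 i)) + ΛN 0 + Λsom 0 :=
  discrete_total_mass_conservation_general N hN τ h H Aa Ar Ba Br wa wr a r ΛN Λsom ha_upd hr_upd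
    ha1_upd haN_upd hr1_upd hrN_upd hΛN_upd hΛsom_upd
end
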